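/- arXiv:2106.14121 — 3 statements merged into one kernel-verified Lean document; each statement's English description precedes it below -/
import Mathlib

section
/- Let p : X ⟶ S × T be a functor of 1-categories such that (i) p_S = π_S ∘ p is a cocartesian fibration and p carries p_S-cocartesian morphisms to morphisms whose T-component is an identity, and (ii) for every object s of S the restriction p_s : X_s ⟶ T of p_T to the fiber X_s over s is a cartesian fibration. Then p_T = π_T ∘ p is a cartesian fibration, and p carries p_T-cartesian morphisms to morphisms of S × T whose S-component is an isomorphism. -/
open CategoryTheory

universe v₁ v₂ v₃ u₁ u₂ u₃

variable {X : Type u₁} {S : Type u₂} {T : Type u₃}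
variable [Category.{v₁} X] [Category.{v₂} S] [Category.{v₃} T]

/-- A morphism `e` of `X` is `p`-cocartesian (Grothendieck sense). -/
def IsCocart (p : X ⥤ S) {x y : X} (e : x ⟶ y) : Prop :=
  ∀ ⦃z : X⦄ (g : x ⟶ z) (u : p.obj y ⟶ p.obj z),
    p.map g = p.map e ≫ u → ∃! h : y ⟶ z, p.map h = u ∧ e ≫ h = g

/-- A morphism `φ` of `X` is `p`-cartesian (Grothendieck sense). -/
def IsCart (p : X ⥤ S) {x y : X} (φ : x ⟶ y) : Prop :=
  ∀ ⦃z : X⦄ (g : z ⟶ y) (u : p.obj z ⟶ p.obj x),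
    p.map g = u ≫ p.map φ → ∃! h : z ⟶ x, p.map h = u ∧ h ≫ φ = g

/-- For `p : X ⥤ S × T`, a morphism `φ : x ⟶ y` lying in a fiber over `S`
(witnessed by `hxy`) is cartesian for the restriction `p_s` of `p_T` to that fiber. -/
def FiberCart (p : X ⥤ S × T) {x y : X} (φ : x ⟶ y)
    (hxy : (p.obj x).1 = (p.obj y).1) : Prop :=
  ∀ ⦃z : X⦄ (hz : (p.obj z).1 = (p.obj x).1) (g : z ⟶ y),
    (p.map g).1 = eqToHom (hz.trans hxy) →
      ∀ (u : (p.obj z).2 ⟶ (p.obj x).2), (p.map g).2 = u ≫ (p.map φ).2 →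
        ∃! h : z ⟶ x, (p.map h).2 = u ∧ (p.map h).1 = eqToHom hz ∧ h ≫ φ = g

/-- Key lemma: a fiberwise cartesian morphism lying over an `eqToHom` in `S`
is `p_T`-cartesian, given the cocartesian-fibration hypotheses on `p_S`. -/
lemma isCart_of_fiberCart (p : X ⥤ S × T)
    (hfibS : ∀ (x : X) (s : S) (e : (p.obj x).1 ⟶ s),
      ∃ (y : X) (φ : x ⟶ y) (hy : (p.obj y).1 = s),
        (p.map φ).1 ≫ eqToHom hy = e ∧ IsCocart (p ⋙ CategoryTheory.Prod.fst S T) φ)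
    (hpres : ∀ ⦃x y : X⦄ (φ : x ⟶ y), IsCocart (p ⋙ CategoryTheory.Prod.fst S T) φ →
      ∃ h : (p.obj x).2 = (p.obj y).2, (p.map φ).2 = eqToHom h)
    {x y : X} (φ : x ⟶ y) (hxy : (p.obj x).1 = (p.obj y).1)
    (hφ1 : (p.map φ).1 = eqToHom hxy) (hFC : FiberCart p φ hxy) :
    IsCart (p ⋙ CategoryTheory.Prod.snd S T) φ := by
  intro z g u hu
  have hu' : (p.map g).2 = u ≫ (p.map φ).2 := hu
  -- cocartesian lift of the S-component of g
  obtain ⟨z', ψ, hy, hψ1, hψcc⟩ := hfibS z (p.obj x).1 ((p.map g).1 ≫ eqToHom hxy.symm)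
  obtain ⟨h2, hψ2⟩ := hpres ψ hψcc
  have hψ1' : (p.map ψ).1 = (p.map g).1 ≫ eqToHom (hxy.symm.trans hy.symm) := by
    calc (p.map ψ).1 = ((p.map ψ).1 ≫ eqToHom hy) ≫ eqToHom hy.symm := by simp
      _ = ((p.map g).1 ≫ eqToHom hxy.symm) ≫ eqToHom hy.symm := by rw [hψ1]
      _ = _ := by simp
  -- factor g through ψ
  have hgfac : (p.map g).1 = (p.map ψ).1 ≫ (eqToHom hy ≫ eqToHom hxy) := by
    rw [hψ1']; simp
  obtain ⟨g', ⟨hg'1, hg'fac⟩, hg'uniq⟩ := hψcc g (eqToHom hy ≫ eqToHom hxy) hgfac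
  have hg'1 : (p.map g').1 = eqToHom hy ≫ eqToHom hxy := hg'1
  -- apply fiberwise cartesianness
  have hg'2 : (p.map g').2 = (eqToHom h2.symm ≫ u) ≫ (p.map φ).2 := by
    have : (p.map g).2 = (p.map ψ).2 ≫ (p.map g').2 := by
      rw [← hg'fac]; simp
    rw [hψ2, hu'] at this
    calc (p.map g').2 = eqToHom h2.symm ≫ (eqToHom h2 ≫ (p.map g').2) := by simp
      _ = eqToHom h2.symm ≫ u ≫ (p.map φ).2 := by rw [← this]
      _ = (eqToHom h2.symm ≫ u) ≫ (p.map φ).2 := by simp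
  obtain ⟨h', ⟨hh'2, hh'1, hh'fac⟩, hh'uniq⟩ :=
    hFC hy g' (by rw [hg'1]; simp) (eqToHom h2.symm ≫ u) hg'2
  refine ⟨ψ ≫ h', ⟨?_, ?_⟩, ?_⟩
  · show (p.map (ψ ≫ h')).2 = u
    rw [p.map_comp]
    show (p.map ψ).2 ≫ (p.map h').2 = u
    rw [hψ2, hh'2]; simp
  · rw [Category.assoc, hh'fac, hg'fac]
  · -- uniqueness
    rintro k ⟨hk2, hkfac⟩
    have hk2 : (p.map k).2 = u := hk2
    have hk1 : (p.map k).1 = (p.map ψ).1 ≫ eqToHom hy := by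
      have : (p.map g).1 = (p.map k).1 ≫ (p.map φ).1 := by rw [← hkfac]; simp
      rw [hφ1] at this
      rw [hψ1']
      calc (p.map k).1 = ((p.map k).1 ≫ eqToHom hxy) ≫ eqToHom hxy.symm := by simp
        _ = (p.map g).1 ≫ eqToHom hxy.symm := by rw [← this]
        _ = _ := by simp
    obtain ⟨m, ⟨hm1, hmfac⟩, hmuniq⟩ := hψcc k (eqToHom hy) hk1
    have hm1 : (p.map m).1 = eqToHom hy := hm1
    -- m ≫ φ = g'
    have hmφ : m ≫ φ = g' := by
      apply hg'uniq
      constructor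
      · show (p.map (m ≫ φ)).1 = eqToHom hy ≫ eqToHom hxy
        rw [p.map_comp]
        show (p.map m).1 ≫ (p.map φ).1 = _
        rw [hm1, hφ1]
      · rw [← Category.assoc, hmfac, hkfac]
    -- (p.map m).2 = eqToHom h2.symm ≫ u
    have hm2 : (p.map m).2 = eqToHom h2.symm ≫ u := by
      have : (p.map k).2 = (p.map ψ).2 ≫ (p.map m).2 := by rw [← hmfac]; simp
      rw [hψ2, hk2] at this
      calc (p.map m).2 = eqToHom h2.symm ≫ (eqToHom h2 ≫ (p.map m).2) := by simp
        _ = eqToHom h2.symm ≫ u := by rw [← this]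
    have : m = h' := hh'uniq m ⟨hm2, hm1, hmφ⟩
    rw [← hmfac, this]

/-- Let `p : X ⥤ S × T` be a functor such that (i) `p_S = p ⋙ π_S` is a cocartesian
fibration and `p` carries `p_S`-cocartesian morphisms to morphisms whose `T`-component
is an identity, and (ii) for every `s` the restriction `p_s : X_s ⥤ T` of `p_T` to the
fiber over `s` is a cartesian fibration.  Then `p_T = p ⋙ π_T` is a cartesian
fibration, and `p` carries `p_T`-cartesian morphisms to morphisms of `S × T` whose
`S`-component is an isomorphism. -/
theorem pT_cartesian_fibration (p : X ⥤ S × T)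
    (hfibS : ∀ (x : X) (s : S) (e : (p.obj x).1 ⟶ s),
      ∃ (y : X) (φ : x ⟶ y) (hy : (p.obj y).1 = s),
        (p.map φ).1 ≫ eqToHom hy = e ∧ IsCocart (p ⋙ CategoryTheory.Prod.fst S T) φ)
    (hpres : ∀ ⦃x y : X⦄ (φ : x ⟶ y), IsCocart (p ⋙ CategoryTheory.Prod.fst S T) φ →
      ∃ h : (p.obj x).2 = (p.obj y).2, (p.map φ).2 = eqToHom h)
    (hfibT : ∀ (y : X) (t : T) (e : t ⟶ (p.obj y).2),
      ∃ (x : X) (φ : x ⟶ y) (hx2 : (p.obj x).2 = t) (hxy : (p.obj x).1 = (p.obj y).1),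
        (p.map φ).1 = eqToHom hxy ∧ eqToHom hx2.symm ≫ (p.map φ).2 = e ∧
          FiberCart p φ hxy) :
    (∀ (y : X) (t : T) (e : t ⟶ (p.obj y).2),
      ∃ (x : X) (φ : x ⟶ y) (hx2 : (p.obj x).2 = t),
        eqToHom hx2.symm ≫ (p.map φ).2 = e ∧
          IsCart (p ⋙ CategoryTheory.Prod.snd S T) φ) ∧
    ∀ ⦃x y : X⦄ (φ : x ⟶ y),
      IsCart (p ⋙ CategoryTheory.Prod.snd S T) φ → IsIso (p.map φ).1 := by
  constructor
  · intro y t e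
    obtain ⟨x, φ, hx2, hxy, hφ1, hφ2, hFC⟩ := hfibT y t e
    exact ⟨x, φ, hx2, hφ2, isCart_of_fiberCart p hfibS hpres φ hxy hφ1 hFC⟩
  · intro x y φ hφ
    -- fiberwise cartesian lift of the T-component of φ
    obtain ⟨x', ψ, hx2, hxy', hψ1, hψ2, hFC⟩ := hfibT y (p.obj x).2 (p.map φ).2
    have hψcart : IsCart (p ⋙ CategoryTheory.Prod.snd S T) ψ :=
      isCart_of_fiberCart p hfibS hpres ψ hxy' hψ1 hFC
    -- comparison maps
    have hψ2' : (p.map ψ).2 = eqToHom hx2 ≫ (p.map φ).2 := by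
      rw [← hψ2]; simp
    obtain ⟨a, ⟨ha2, hafac⟩, hauniq⟩ := hφ ψ (eqToHom hx2) hψ2'
    have hφ2' : (p.map φ).2 = eqToHom hx2.symm ≫ (p.map ψ).2 := by
      rw [hψ2']; simp
    obtain ⟨b, ⟨hb2, hbfac⟩, hbuniq⟩ := hψcart φ (eqToHom hx2.symm) hφ2'
    have ha2 : (p.map a).2 = eqToHom hx2 := ha2
    have hb2 : (p.map b).2 = eqToHom hx2.symm := hb2
    -- b ≫ a = 𝟙 x
    have hba : b ≫ a = 𝟙 x := by
      have h1 := hφ φ (𝟙 (p.obj x).2) (by simp)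
      obtain ⟨c, _, hcuniq⟩ := h1
      have e1 : b ≫ a = c := by
        apply hcuniq
        constructor
        · show (p.map (b ≫ a)).2 = 𝟙 _
          rw [p.map_comp]
          show (p.map b).2 ≫ (p.map a).2 = _
          rw [hb2, ha2]; simp
        · rw [Category.assoc, hafac, hbfac]
      have e2 : 𝟙 x = c := by
        apply hcuniq
        constructor
        · show (p.map (𝟙 x)).2 = 𝟙 _
          rw [p.map_id]; rfl
        · simp
      rw [e1, ← e2]
    -- a ≫ b = 𝟙 x'
    have hab : a ≫ b = 𝟙 x' := by
      have h1 := hψcart ψ (𝟙 (p.obj x').2) (by simp)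
      obtain ⟨c, _, hcuniq⟩ := h1
      have e1 : a ≫ b = c := by
        apply hcuniq
        constructor
        · show (p.map (a ≫ b)).2 = 𝟙 _
          rw [p.map_comp]
          show (p.map a).2 ≫ (p.map b).2 = _
          rw [ha2, hb2]; simp
        · rw [Category.assoc, hbfac, hafac]
      have e2 : 𝟙 x' = c := by
        apply hcuniq
        constructor
        · show (p.map (𝟙 x')).2 = 𝟙 _
          rw [p.map_id]; rfl
        · simp
      rw [e1, ← e2]
    have : IsIso a := ⟨b, hab, hba⟩
    have : IsIso (p.map a) := inferInstance
    have hai : IsIso (p.map a).1 := by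
      have : IsIso ((CategoryTheory.Prod.fst S T).map (p.map a)) := inferInstance
      exact this
    have hkey : (p.map a).1 ≫ (p.map φ).1 = eqToHom hxy' := by
      have : p.map (a ≫ φ) = p.map ψ := by rw [hafac]
      rw [p.map_comp] at this
      have := congrArg Prod.fst this
      simpa [hψ1] using this
    have : (p.map φ).1 = inv (p.map a).1 ≫ eqToHom hxy' := by
      rw [← hkey, IsIso.inv_hom_id_assoc]
    rw [this]
    infer_instance
end

section
/- Let (D, ⊠, 1_⊠, ⊗, 1_⊗, ζ) be a duoidal category. The category Comon_⊗(D) of comonoids in (D, ⊗, 1_⊗) carries a monoidal structure in which the tensor product of comonoids (C, δ_C, ε_C) and (C′, δ_{C′}, ε_{C′}) is C ⊠ C′ with comultiplication (C ⊠ C′) → (C ⊗ C) ⊠ (C′ ⊗ C′) → (C ⊠ C′) ⊗ (C ⊠ C′) given by δ_C ⊠ δ_{C′} followed by the interchange ζ, with counit ε_C ⊠ ε_{C′} followed by μ : 1_⊗ ⊠ 1_⊗ → 1_⊗, and with monoidal unit the comonoid (1_⊠, Δ, ι). -/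
open CategoryTheory

universe v u

/-- A duoidal structure on a category `D`: two monoidal structures `box` (`⊠`) and
`star` (`⊗`), an interchange transformation `ζ`, and structure morphisms
`Δ : 1_⊠ → 1_⊠ ⊗ 1_⊠`, `μ : 1_⊗ ⊠ 1_⊗ → 1_⊗`, `ι : 1_⊠ → 1_⊗` satisfying the
Aguiar–Mahajan axioms. -/
structure DuoidalStruct (D : Type u) [Category.{v} D] where
  /-- the first monoidal structure `⊠` -/
  box : MonoidalCategory D
  /-- the second monoidal structure `⊗` -/
  star : MonoidalCategory D
  /-- the interchange `ζ : (A ⊗ B) ⊠ (C ⊗ E) ⟶ (A ⊠ C) ⊗ (B ⊠ E)` -/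
  ζ : ∀ A B C E : D,
    box.tensorObj (star.tensorObj A B) (star.tensorObj C E) ⟶
      star.tensorObj (box.tensorObj A C) (box.tensorObj B E)
  /-- `Δ : 1_⊠ ⟶ 1_⊠ ⊗ 1_⊠` -/
  Δ : box.tensorUnit ⟶ star.tensorObj box.tensorUnit box.tensorUnit
  /-- `μ : 1_⊗ ⊠ 1_⊗ ⟶ 1_⊗` -/
  μ : box.tensorObj star.tensorUnit star.tensorUnit ⟶ star.tensorUnit
  /-- `ι : 1_⊠ ⟶ 1_⊗` -/
  ι : box.tensorUnit ⟶ star.tensorUnit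
  /-- naturality of the interchange -/
  ζ_natural : ∀ {A A' B B' C C' E E' : D}
    (f : A ⟶ A') (g : B ⟶ B') (h : C ⟶ C') (k : E ⟶ E'),
    box.tensorHom (star.tensorHom f g) (star.tensorHom h k) ≫ ζ A' B' C' E' =
      ζ A B C E ≫ star.tensorHom (box.tensorHom f h) (box.tensorHom g k)
  /-- associativity of the interchange in the `⊠`-direction -/
  ζ_box_assoc : ∀ A B C E F G : D,
    box.tensorHom (ζ A B C E) (𝟙 (star.tensorObj F G)) ≫
        ζ (box.tensorObj A C) (box.tensorObj B E) F G ≫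
        star.tensorHom (box.associator A C F).hom (box.associator B E G).hom =
      (box.associator (star.tensorObj A B) (star.tensorObj C E)
          (star.tensorObj F G)).hom ≫
        box.tensorHom (𝟙 (star.tensorObj A B)) (ζ C E F G) ≫
        ζ A B (box.tensorObj C F) (box.tensorObj E G)
  /-- associativity of the interchange in the `⊗`-direction -/
  ζ_star_assoc : ∀ A B C E F G : D,
    ζ (star.tensorObj A B) C (star.tensorObj E F) G ≫
        star.tensorHom (ζ A B E F) (𝟙 (box.tensorObj C G)) ≫
        (star.associator (box.tensorObj A E) (box.tensorObj B F)
          (box.tensorObj C G)).hom =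
      box.tensorHom (star.associator A B C).hom (star.associator E F G).hom ≫
        ζ A (star.tensorObj B C) E (star.tensorObj F G) ≫
        star.tensorHom (𝟙 (box.tensorObj A E)) (ζ B C F G)
  /-- left unitality of the interchange for the `⊠`-unit -/
  ζ_box_leftUnitor : ∀ A B : D,
    box.tensorHom Δ (𝟙 (star.tensorObj A B)) ≫
        ζ box.tensorUnit box.tensorUnit A B ≫
        star.tensorHom (box.leftUnitor A).hom (box.leftUnitor B).hom =
      (box.leftUnitor (star.tensorObj A B)).hom
  /-- right unitality of the interchange for the `⊠`-unit -/
  ζ_box_rightUnitor : ∀ A B : D,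
    box.tensorHom (𝟙 (star.tensorObj A B)) Δ ≫
        ζ A B box.tensorUnit box.tensorUnit ≫
        star.tensorHom (box.rightUnitor A).hom (box.rightUnitor B).hom =
      (box.rightUnitor (star.tensorObj A B)).hom
  /-- left unitality of the interchange for the `⊗`-unit -/
  ζ_star_leftUnitor : ∀ A B : D,
    ζ star.tensorUnit A star.tensorUnit B ≫
        star.tensorHom μ (𝟙 (box.tensorObj A B)) ≫
        (star.leftUnitor (box.tensorObj A B)).hom =
      box.tensorHom (star.leftUnitor A).hom (star.leftUnitor B).hom
  /-- right unitality of the interchange for the `⊗`-unit -/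
  ζ_star_rightUnitor : ∀ A B : D,
    ζ A star.tensorUnit B star.tensorUnit ≫
        star.tensorHom (𝟙 (box.tensorObj A B)) μ ≫
        (star.rightUnitor (box.tensorObj A B)).hom =
      box.tensorHom (star.rightUnitor A).hom (star.rightUnitor B).hom
  /-- `1_⊗` is a `⊠`-monoid: associativity -/
  μ_assoc :
    box.tensorHom μ (𝟙 star.tensorUnit) ≫ μ =
      (box.associator star.tensorUnit star.tensorUnit star.tensorUnit).hom ≫
        box.tensorHom (𝟙 star.tensorUnit) μ ≫ μ
  /-- `1_⊗` is a `⊠`-monoid: left unit -/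
  μ_left_unit :
    box.tensorHom ι (𝟙 star.tensorUnit) ≫ μ = (box.leftUnitor star.tensorUnit).hom
  /-- `1_⊗` is a `⊠`-monoid: right unit -/
  μ_right_unit :
    box.tensorHom (𝟙 star.tensorUnit) ι ≫ μ = (box.rightUnitor star.tensorUnit).hom
  /-- `1_⊠` is a `⊗`-comonoid: coassociativity -/
  Δ_coassoc :
    Δ ≫ star.tensorHom Δ (𝟙 box.tensorUnit) ≫
        (star.associator box.tensorUnit box.tensorUnit box.tensorUnit).hom =
      Δ ≫ star.tensorHom (𝟙 box.tensorUnit) Δ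
  /-- `1_⊠` is a `⊗`-comonoid: left counit -/
  Δ_left_counit :
    Δ ≫ star.tensorHom ι (𝟙 box.tensorUnit) ≫
      (star.leftUnitor box.tensorUnit).hom = 𝟙 box.tensorUnit
  /-- `1_⊠` is a `⊗`-comonoid: right counit -/
  Δ_right_counit :
    Δ ≫ star.tensorHom (𝟙 box.tensorUnit) ι ≫
      (star.rightUnitor box.tensorUnit).hom = 𝟙 box.tensorUnit

/-- The property that `(X, mul, one)` is a monoid object in the monoidal
category structure `M` on `D`. -/
structure IsMonoidObj {D : Type u} [Category.{v} D] (M : MonoidalCategory D)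
    (X : D) (mul : M.tensorObj X X ⟶ X) (one : M.tensorUnit ⟶ X) : Prop where
  mul_assoc :
    M.tensorHom mul (𝟙 X) ≫ mul =
      (M.associator X X X).hom ≫ M.tensorHom (𝟙 X) mul ≫ mul
  one_mul : M.tensorHom one (𝟙 X) ≫ mul = (M.leftUnitor X).hom
  mul_one : M.tensorHom (𝟙 X) one ≫ mul = (M.rightUnitor X).hom

/-- The property that `(X, comul, counit)` is a comonoid object in the monoidal
category structure `M` on `D`. -/
structure IsComonoidObj {D : Type u} [Category.{v} D] (M : MonoidalCategory D)
    (X : D) (comul : X ⟶ M.tensorObj X X) (counit : X ⟶ M.tensorUnit) : Prop where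
  comul_coassoc :
    comul ≫ M.tensorHom comul (𝟙 X) ≫ (M.associator X X X).hom =
      comul ≫ M.tensorHom (𝟙 X) comul
  counit_comul : comul ≫ M.tensorHom counit (𝟙 X) ≫ (M.leftUnitor X).hom = 𝟙 X
  comul_counit : comul ≫ M.tensorHom (𝟙 X) counit ≫ (M.rightUnitor X).hom = 𝟙 X

variable {D : Type u} [Category.{v} D]

/-- A comonoid object in `(D, ⊗, 1_⊗)` for a duoidal structure `S` on `D`. -/
structure ComonObj (S : DuoidalStruct D) where
  X : D
  comul : X ⟶ S.star.tensorObj X X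
  counit : X ⟶ S.star.tensorUnit
  is : IsComonoidObj S.star X comul counit

/-- A morphism of `⊗`-comonoids. -/
@[ext]
structure ComonHom {S : DuoidalStruct D} (A B : ComonObj S) where
  hom : A.X ⟶ B.X
  hom_comul : hom ≫ B.comul = A.comul ≫ S.star.tensorHom hom hom
  hom_counit : hom ≫ B.counit = A.counit

instance (S : DuoidalStruct D) : Category (ComonObj S) where
  Hom A B := ComonHom A B
  id A := ⟨𝟙 A.X, by rw [S.star.id_tensorHom_id]; simp, by simp⟩
  comp {A B C} f g := ⟨f.hom ≫ g.hom, by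
      rw [Category.assoc, g.hom_comul, ← Category.assoc, f.hom_comul,
        Category.assoc, S.star.tensorHom_comp_tensorHom], by
      rw [Category.assoc, g.hom_counit, f.hom_counit]⟩
  id_comp f := by apply ComonHom.ext; simp
  comp_id f := by apply ComonHom.ext; simp
  assoc f g h := by apply ComonHom.ext; simp

section ComonMonoidalAux

@[simp] lemma ComonHom.comp_hom {S : DuoidalStruct D} {A B C : ComonObj S}
    (f : A ⟶ B) (g : B ⟶ C) : (f ≫ g).hom = f.hom ≫ g.hom := rfl

@[simp] lemma ComonHom.id_hom {S : DuoidalStruct D} (A : ComonObj S) :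
    ComonHom.hom (𝟙 A) = 𝟙 A.X := rfl

lemma tH_id_left (M : MonoidalCategory D) {X Y Z : D} (f : Y ⟶ Z) :
    M.tensorHom (𝟙 X) f = M.whiskerLeft X f := by
  rw [M.tensorHom_def, M.id_whiskerRight, Category.id_comp]

lemma tH_id_right (M : MonoidalCategory D) {Y Z : D} (f : Y ⟶ Z) (X : D) :
    M.tensorHom f (𝟙 X) = M.whiskerRight f X := by
  rw [M.tensorHom_def, M.whiskerLeft_id, Category.comp_id]

lemma leftUnitor_nat (M : MonoidalCategory D) {X Y : D} (f : X ⟶ Y) :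
    M.tensorHom (𝟙 M.tensorUnit) f ≫ (M.leftUnitor Y).hom = (M.leftUnitor X).hom ≫ f := by
  rw [tH_id_left]; exact M.leftUnitor_naturality f

lemma rightUnitor_nat (M : MonoidalCategory D) {X Y : D} (f : X ⟶ Y) :
    M.tensorHom f (𝟙 M.tensorUnit) ≫ (M.rightUnitor Y).hom = (M.rightUnitor X).hom ≫ f := by
  rw [tH_id_right]; exact M.rightUnitor_naturality f

lemma pentagon' (M : MonoidalCategory D) (W X Y Z : D) :
    M.tensorHom (M.associator W X Y).hom (𝟙 Z) ≫
      (M.associator W (M.tensorObj X Y) Z).hom ≫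
      M.tensorHom (𝟙 W) (M.associator X Y Z).hom =
    (M.associator (M.tensorObj W X) Y Z).hom ≫
      (M.associator W X (M.tensorObj Y Z)).hom := by
  rw [tH_id_left, tH_id_right]; exact M.pentagon W X Y Z

lemma triangle' (M : MonoidalCategory D) (X Y : D) :
    (M.associator X M.tensorUnit Y).hom ≫ M.tensorHom (𝟙 X) (M.leftUnitor Y).hom =
      M.tensorHom (M.rightUnitor X).hom (𝟙 Y) := by
  rw [tH_id_left, tH_id_right]; exact M.triangle X Y

variable {S : DuoidalStruct D}

lemma tensor_coassoc (S : DuoidalStruct D) {A B : D}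
    (δA : A ⟶ S.star.tensorObj A A) (δB : B ⟶ S.star.tensorObj B B)
    (hA : δA ≫ S.star.tensorHom δA (𝟙 A) ≫ (S.star.associator A A A).hom
        = δA ≫ S.star.tensorHom (𝟙 A) δA)
    (hB : δB ≫ S.star.tensorHom δB (𝟙 B) ≫ (S.star.associator B B B).hom
        = δB ≫ S.star.tensorHom (𝟙 B) δB) :
    (S.box.tensorHom δA δB ≫ S.ζ A A B B) ≫
      S.star.tensorHom (S.box.tensorHom δA δB ≫ S.ζ A A B B) (𝟙 (S.box.tensorObj A B)) ≫
      (S.star.associator _ _ _).hom =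
    (S.box.tensorHom δA δB ≫ S.ζ A A B B) ≫
      S.star.tensorHom (𝟙 (S.box.tensorObj A B)) (S.box.tensorHom δA δB ≫ S.ζ A A B B) := by
  have splitL : S.star.tensorHom (S.box.tensorHom δA δB ≫ S.ζ A A B B) (𝟙 (S.box.tensorObj A B))
      = S.star.tensorHom (S.box.tensorHom δA δB) (𝟙 (S.box.tensorObj A B)) ≫
        S.star.tensorHom (S.ζ A A B B) (𝟙 (S.box.tensorObj A B)) := by
    rw [S.star.tensorHom_comp_tensorHom, Category.comp_id]
  have splitR : S.star.tensorHom (𝟙 (S.box.tensorObj A B)) (S.box.tensorHom δA δB ≫ S.ζ A A B B)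
      = S.star.tensorHom (𝟙 (S.box.tensorObj A B)) (S.box.tensorHom δA δB) ≫
        S.star.tensorHom (𝟙 (S.box.tensorObj A B)) (S.ζ A A B B) := by
    rw [S.star.tensorHom_comp_tensorHom, Category.comp_id]
  rw [splitL, splitR]
  have n1 := S.ζ_natural δA (𝟙 A) δB (𝟙 B)
  have n2 := S.ζ_natural (𝟙 A) δA (𝟙 B) δB
  rw [S.box.id_tensorHom_id] at n1 n2
  have sa := S.ζ_star_assoc A A A B B B
  simp only [Category.assoc]
  rw [← reassoc_of% n1, sa]
  slice_lhs 1 3 => rw [S.box.tensorHom_comp_tensorHom, S.box.tensorHom_comp_tensorHom]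
  simp only [Category.assoc, hA, hB]
  rw [← S.box.tensorHom_comp_tensorHom]
  simp only [Category.assoc]
  rw [reassoc_of% n2]

lemma tensor_counit_left (S : DuoidalStruct D) {A B : D}
    (δA : A ⟶ S.star.tensorObj A A) (δB : B ⟶ S.star.tensorObj B B)
    (εA : A ⟶ S.star.tensorUnit) (εB : B ⟶ S.star.tensorUnit)
    (hA : δA ≫ S.star.tensorHom εA (𝟙 A) ≫ (S.star.leftUnitor A).hom = 𝟙 A)
    (hB : δB ≫ S.star.tensorHom εB (𝟙 B) ≫ (S.star.leftUnitor B).hom = 𝟙 B) :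
    (S.box.tensorHom δA δB ≫ S.ζ A A B B) ≫
      S.star.tensorHom (S.box.tensorHom εA εB ≫ S.μ) (𝟙 (S.box.tensorObj A B)) ≫
      (S.star.leftUnitor (S.box.tensorObj A B)).hom = 𝟙 (S.box.tensorObj A B) := by
  have split : S.star.tensorHom (S.box.tensorHom εA εB ≫ S.μ) (𝟙 (S.box.tensorObj A B))
      = S.star.tensorHom (S.box.tensorHom εA εB) (𝟙 (S.box.tensorObj A B)) ≫
        S.star.tensorHom S.μ (𝟙 (S.box.tensorObj A B)) := by
    rw [S.star.tensorHom_comp_tensorHom, Category.comp_id]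
  rw [split]
  have n := S.ζ_natural εA (𝟙 A) εB (𝟙 B)
  rw [S.box.id_tensorHom_id] at n
  simp only [Category.assoc]
  rw [← reassoc_of% n, S.ζ_star_leftUnitor A B]
  slice_lhs 1 3 => rw [S.box.tensorHom_comp_tensorHom, S.box.tensorHom_comp_tensorHom]
  simp only [Category.assoc, hA, hB]
  rw [S.box.id_tensorHom_id]

lemma tensor_counit_right (S : DuoidalStruct D) {A B : D}
    (δA : A ⟶ S.star.tensorObj A A) (δB : B ⟶ S.star.tensorObj B B)
    (εA : A ⟶ S.star.tensorUnit) (εB : B ⟶ S.star.tensorUnit)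
    (hA : δA ≫ S.star.tensorHom (𝟙 A) εA ≫ (S.star.rightUnitor A).hom = 𝟙 A)
    (hB : δB ≫ S.star.tensorHom (𝟙 B) εB ≫ (S.star.rightUnitor B).hom = 𝟙 B) :
    (S.box.tensorHom δA δB ≫ S.ζ A A B B) ≫
      S.star.tensorHom (𝟙 (S.box.tensorObj A B)) (S.box.tensorHom εA εB ≫ S.μ) ≫
      (S.star.rightUnitor (S.box.tensorObj A B)).hom = 𝟙 (S.box.tensorObj A B) := by
  have split : S.star.tensorHom (𝟙 (S.box.tensorObj A B)) (S.box.tensorHom εA εB ≫ S.μ)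
      = S.star.tensorHom (𝟙 (S.box.tensorObj A B)) (S.box.tensorHom εA εB) ≫
        S.star.tensorHom (𝟙 (S.box.tensorObj A B)) S.μ := by
    rw [S.star.tensorHom_comp_tensorHom, Category.comp_id]
  rw [split]
  have n := S.ζ_natural (𝟙 A) εA (𝟙 B) εB
  rw [S.box.id_tensorHom_id] at n
  simp only [Category.assoc]
  rw [← reassoc_of% n, S.ζ_star_rightUnitor A B]
  slice_lhs 1 3 => rw [S.box.tensorHom_comp_tensorHom, S.box.tensorHom_comp_tensorHom]
  simp only [Category.assoc, hA, hB]
  rw [S.box.id_tensorHom_id]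

/-- Tensor product of comonoids. -/
def tensorComon (S : DuoidalStruct D) (A B : ComonObj S) : ComonObj S where
  X := S.box.tensorObj A.X B.X
  comul := S.box.tensorHom A.comul B.comul ≫ S.ζ A.X A.X B.X B.X
  counit := S.box.tensorHom A.counit B.counit ≫ S.μ
  is :=
    { comul_coassoc := tensor_coassoc S A.comul B.comul A.is.comul_coassoc B.is.comul_coassoc
      counit_comul := tensor_counit_left S A.comul B.comul A.counit B.counit
        A.is.counit_comul B.is.counit_comul
      comul_counit := tensor_counit_right S A.comul B.comul A.counit B.counit
        A.is.comul_counit B.is.comul_counit }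

/-- The unit comonoid `(1_⊠, Δ, ι)`. -/
def unitComon (S : DuoidalStruct D) : ComonObj S :=
  ⟨S.box.tensorUnit, S.Δ, S.ι, ⟨S.Δ_coassoc, S.Δ_left_counit, S.Δ_right_counit⟩⟩

@[simp] lemma tensorComon_X (A B : ComonObj S) :
    (tensorComon S A B).X = S.box.tensorObj A.X B.X := rfl

@[simp] lemma tensorComon_comul (A B : ComonObj S) :
    (tensorComon S A B).comul = S.box.tensorHom A.comul B.comul ≫ S.ζ A.X A.X B.X B.X := rfl

@[simp] lemma tensorComon_counit (A B : ComonObj S) :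
    (tensorComon S A B).counit = S.box.tensorHom A.counit B.counit ≫ S.μ := rfl

@[simp] lemma unitComon_X : (unitComon S).X = S.box.tensorUnit := rfl

@[simp] lemma unitComon_comul : (unitComon S).comul = S.Δ := rfl

@[simp] lemma unitComon_counit : (unitComon S).counit = S.ι := rfl

/-- Tensor product of comonoid morphisms. -/
def tensorComonHom {A B A' B' : ComonObj S} (f : A ⟶ A') (g : B ⟶ B') :
    tensorComon S A B ⟶ tensorComon S A' B' where
  hom := S.box.tensorHom f.hom g.hom
  hom_comul := by
    simp only [tensorComon_comul]
    dsimp only [tensorComon_X]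
    rw [← Category.assoc, S.box.tensorHom_comp_tensorHom, f.hom_comul, g.hom_comul, ← S.box.tensorHom_comp_tensorHom]
    simp only [Category.assoc]
    rw [S.ζ_natural f.hom f.hom g.hom g.hom]
  hom_counit := by
    simp only [tensorComon_counit]
    dsimp only [tensorComon_X]
    rw [← Category.assoc, S.box.tensorHom_comp_tensorHom, f.hom_counit, g.hom_counit]

@[simp] lemma tensorComonHom_hom {A B A' B' : ComonObj S} (f : A ⟶ A') (g : B ⟶ B') :
    (tensorComonHom f g).hom = S.box.tensorHom f.hom g.hom := rfl

/-- Lift an isomorphism of underlying objects that is a comonoid morphism to an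
isomorphism of comonoids. -/
def liftIso {A B : ComonObj S} (e : A.X ≅ B.X)
    (h1 : e.hom ≫ B.comul = A.comul ≫ S.star.tensorHom e.hom e.hom)
    (h2 : e.hom ≫ B.counit = A.counit) : A ≅ B where
  hom := ⟨e.hom, h1, h2⟩
  inv :=
    { hom := e.inv
      hom_comul := by
        rw [Iso.inv_comp_eq]
        rw [← Category.assoc, h1]
        simp only [Category.assoc]
        rw [S.star.tensorHom_comp_tensorHom, e.hom_inv_id, S.star.id_tensorHom_id, Category.comp_id]
      hom_counit := by rw [Iso.inv_comp_eq, h2] }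
  hom_inv_id := by apply ComonHom.ext; exact e.hom_inv_id
  inv_hom_id := by apply ComonHom.ext; exact e.inv_hom_id

lemma assoc_comul (A B C : ComonObj S) :
    (S.box.associator A.X B.X C.X).hom ≫ (tensorComon S A (tensorComon S B C)).comul =
      (tensorComon S (tensorComon S A B) C).comul ≫
        S.star.tensorHom (S.box.associator A.X B.X C.X).hom
          (S.box.associator A.X B.X C.X).hom := by
  simp only [tensorComon_comul, tensorComon_X]
  have split1 : S.box.tensorHom (S.box.tensorHom A.comul B.comul ≫ S.ζ A.X A.X B.X B.X) C.comul
      = S.box.tensorHom (S.box.tensorHom A.comul B.comul) C.comul ≫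
        S.box.tensorHom (S.ζ A.X A.X B.X B.X) (𝟙 (S.star.tensorObj C.X C.X)) := by
    rw [S.box.tensorHom_comp_tensorHom, Category.comp_id]
  have split2 : S.box.tensorHom A.comul (S.box.tensorHom B.comul C.comul ≫ S.ζ B.X B.X C.X C.X)
      = S.box.tensorHom A.comul (S.box.tensorHom B.comul C.comul) ≫
        S.box.tensorHom (𝟙 (S.star.tensorObj A.X A.X)) (S.ζ B.X B.X C.X C.X) := by
    rw [S.box.tensorHom_comp_tensorHom, Category.comp_id]
  have ba := S.ζ_box_assoc A.X A.X B.X B.X C.X C.X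
  rw [split1, split2]
  simp only [Category.assoc]
  rw [ba]
  rw [reassoc_of% (S.box.associator_naturality A.comul B.comul C.comul)]

lemma assoc_counit (A B C : ComonObj S) :
    (S.box.associator A.X B.X C.X).hom ≫ (tensorComon S A (tensorComon S B C)).counit =
      (tensorComon S (tensorComon S A B) C).counit := by
  simp only [tensorComon_counit]
  dsimp only [tensorComon_X]
  have split1 : S.box.tensorHom (S.box.tensorHom A.counit B.counit ≫ S.μ) C.counit
      = S.box.tensorHom (S.box.tensorHom A.counit B.counit) C.counit ≫
        S.box.tensorHom S.μ (𝟙 S.star.tensorUnit) := by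
    rw [S.box.tensorHom_comp_tensorHom, Category.comp_id]
  have split2 : S.box.tensorHom A.counit (S.box.tensorHom B.counit C.counit ≫ S.μ)
      = S.box.tensorHom A.counit (S.box.tensorHom B.counit C.counit) ≫
        S.box.tensorHom (𝟙 S.star.tensorUnit) S.μ := by
    rw [S.box.tensorHom_comp_tensorHom, Category.comp_id]
  rw [split1, split2]
  simp only [Category.assoc]
  rw [S.μ_assoc]
  rw [reassoc_of% (S.box.associator_naturality A.counit B.counit C.counit)]

lemma lu_comul (A : ComonObj S) :
    (S.box.leftUnitor A.X).hom ≫ A.comul =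
      (tensorComon S (unitComon S) A).comul ≫
        S.star.tensorHom (S.box.leftUnitor A.X).hom (S.box.leftUnitor A.X).hom := by
  simp only [tensorComon_comul, unitComon_comul, unitComon_X]
  dsimp only [tensorComon_X, unitComon_X]
  have split : S.box.tensorHom S.Δ A.comul
      = S.box.tensorHom (𝟙 S.box.tensorUnit) A.comul ≫
        S.box.tensorHom S.Δ (𝟙 (S.star.tensorObj A.X A.X)) := by
    rw [S.box.tensorHom_comp_tensorHom, Category.comp_id, Category.id_comp]
  rw [split]
  simp only [Category.assoc]
  rw [S.ζ_box_leftUnitor A.X A.X, leftUnitor_nat S.box A.comul]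

lemma lu_counit (A : ComonObj S) :
    (S.box.leftUnitor A.X).hom ≫ A.counit = (tensorComon S (unitComon S) A).counit := by
  simp only [tensorComon_counit, unitComon_counit, unitComon_X]
  have split : S.box.tensorHom S.ι A.counit
      = S.box.tensorHom (𝟙 S.box.tensorUnit) A.counit ≫
        S.box.tensorHom S.ι (𝟙 S.star.tensorUnit) := by
    rw [S.box.tensorHom_comp_tensorHom, Category.comp_id, Category.id_comp]
  rw [split]
  simp only [Category.assoc]
  rw [S.μ_left_unit, leftUnitor_nat S.box A.counit]

lemma ru_comul (A : ComonObj S) :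
    (S.box.rightUnitor A.X).hom ≫ A.comul =
      (tensorComon S A (unitComon S)).comul ≫
        S.star.tensorHom (S.box.rightUnitor A.X).hom (S.box.rightUnitor A.X).hom := by
  simp only [tensorComon_comul, unitComon_comul, unitComon_X]
  dsimp only [tensorComon_X, unitComon_X]
  have split : S.box.tensorHom A.comul S.Δ
      = S.box.tensorHom A.comul (𝟙 S.box.tensorUnit) ≫
        S.box.tensorHom (𝟙 (S.star.tensorObj A.X A.X)) S.Δ := by
    rw [S.box.tensorHom_comp_tensorHom, Category.comp_id, Category.id_comp]
  rw [split]
  simp only [Category.assoc]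
  rw [S.ζ_box_rightUnitor A.X A.X, rightUnitor_nat S.box A.comul]

lemma ru_counit (A : ComonObj S) :
    (S.box.rightUnitor A.X).hom ≫ A.counit = (tensorComon S A (unitComon S)).counit := by
  simp only [tensorComon_counit, unitComon_counit, unitComon_X]
  have split : S.box.tensorHom A.counit S.ι
      = S.box.tensorHom A.counit (𝟙 S.box.tensorUnit) ≫
        S.box.tensorHom (𝟙 S.star.tensorUnit) S.ι := by
    rw [S.box.tensorHom_comp_tensorHom, Category.comp_id, Category.id_comp]
  rw [split]
  simp only [Category.assoc]
  rw [S.μ_right_unit, rightUnitor_nat S.box A.counit]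

/-- The monoidal structure on `⊗`-comonoids. -/
def comonMonoidal (S : DuoidalStruct D) : MonoidalCategory (ComonObj S) where
  tensorObj := tensorComon S
  tensorHom := tensorComonHom
  whiskerLeft A _ _ g := tensorComonHom (𝟙 A) g
  whiskerRight f B := tensorComonHom f (𝟙 B)
  tensorUnit := unitComon S
  associator A B C := liftIso (S.box.associator A.X B.X C.X) (assoc_comul A B C) (assoc_counit A B C)
  leftUnitor A := liftIso (S.box.leftUnitor A.X) (lu_comul A) (lu_counit A)
  rightUnitor A := liftIso (S.box.rightUnitor A.X) (ru_comul A) (ru_counit A)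
  tensorHom_def f g := by
    apply ComonHom.ext
    show S.box.tensorHom f.hom g.hom = S.box.tensorHom f.hom (𝟙 _) ≫ S.box.tensorHom (𝟙 _) g.hom
    rw [S.box.tensorHom_comp_tensorHom, Category.id_comp, Category.comp_id]
  id_tensorHom_id A B := by
    apply ComonHom.ext
    exact S.box.id_tensorHom_id A.X B.X
  tensorHom_comp_tensorHom f₁ f₂ g₁ g₂ := by
    apply ComonHom.ext
    exact S.box.tensorHom_comp_tensorHom f₁.hom f₂.hom g₁.hom g₂.hom
  whiskerLeft_id A B := by
    apply ComonHom.ext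
    exact S.box.id_tensorHom_id A.X B.X
  id_whiskerRight A B := by
    apply ComonHom.ext
    exact S.box.id_tensorHom_id A.X B.X
  associator_naturality f₁ f₂ f₃ := by
    apply ComonHom.ext
    exact S.box.associator_naturality f₁.hom f₂.hom f₃.hom
  leftUnitor_naturality f := by
    apply ComonHom.ext
    exact leftUnitor_nat S.box f.hom
  rightUnitor_naturality f := by
    apply ComonHom.ext
    exact rightUnitor_nat S.box f.hom
  pentagon A B C E := by
    apply ComonHom.ext
    exact pentagon' S.box A.X B.X C.X E.X
  triangle A B := by
    apply ComonHom.ext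
    exact triangle' S.box A.X B.X

end ComonMonoidalAux

/-- For a duoidal category `(D, ⊠, 1_⊠, ⊗, 1_⊗, ζ)`, the category of `⊗`-comonoids
carries a monoidal structure whose tensor product of `(C, δ_C, ε_C)` and
`(C', δ_{C'}, ε_{C'})` is `C ⊠ C'` with comultiplication `(δ_C ⊠ δ_{C'}) ≫ ζ`,
counit `(ε_C ⊠ ε_{C'}) ≫ μ`, whose tensor product of comonoid morphisms is `⊠`,
and whose unit is the comonoid `(1_⊠, Δ, ι)`. -/
theorem comon_monoidal (S : DuoidalStruct D) :
    ∃ M : MonoidalCategory (ComonObj S),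
      (∀ A B : ComonObj S, (M.tensorObj A B).X = S.box.tensorObj A.X B.X) ∧
      (∀ A B : ComonObj S, HEq (M.tensorObj A B).comul
        (S.box.tensorHom A.comul B.comul ≫ S.ζ A.X A.X B.X B.X)) ∧
      (∀ A B : ComonObj S, HEq (M.tensorObj A B).counit
        (S.box.tensorHom A.counit B.counit ≫ S.μ)) ∧
      (∀ (A B A' B' : ComonObj S) (f : A ⟶ A') (g : B ⟶ B'),
        HEq (ComonHom.hom (M.tensorHom f g)) (S.box.tensorHom f.hom g.hom)) ∧
      M.tensorUnit.X = S.box.tensorUnit ∧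
      HEq M.tensorUnit.comul S.Δ ∧
      HEq M.tensorUnit.counit S.ι := by
  exact ⟨comonMonoidal S, fun A B => rfl, fun A B => HEq.rfl, fun A B => HEq.rfl,
    fun A B A' B' f g => HEq.rfl, rfl, HEq.rfl, HEq.rfl⟩
end

section
/- Let (D, ⊠, 1_⊠, ⊗, 1_⊗, ζ) be a duoidal category. The category Mon_⊠(D) of monoids in (D, ⊠, 1_⊠) carries a monoidal structure under ⊗: the product of monoids (M, m_M, u_M) and (N, m_N, u_N) is M ⊗ N with multiplication (M ⊗ N) ⊠ (M ⊗ N) → (M ⊠ M) ⊗ (N ⊠ N) → M ⊗ N given by the interchange ζ followed by m_M ⊗ m_N, with unit 1_⊠ → 1_⊠ ⊗ 1_⊠ → M ⊗ N given by Δ followed by u_M ⊗ u_N, and with monoidal unit the monoid (1_⊗, μ, ι). -/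
open CategoryTheory

universe v u

variable {D : Type u} [Category.{v} D]

/-- A monoid object in `(D, ⊠, 1_⊠)` for a duoidal structure `S` on `D`. -/
structure MonObj (S : DuoidalStruct D) where
  X : D
  mul : S.box.tensorObj X X ⟶ X
  one : S.box.tensorUnit ⟶ X
  is : IsMonoidObj S.box X mul one

/-- A morphism of `⊠`-monoids. -/
@[ext]
structure MonHom {S : DuoidalStruct D} (A B : MonObj S) where
  hom : A.X ⟶ B.X
  mul_hom : S.box.tensorHom hom hom ≫ B.mul = A.mul ≫ hom
  one_hom : A.one ≫ hom = B.one

instance (S : DuoidalStruct D) : Category (MonObj S) where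
  Hom A B := MonHom A B
  id A := ⟨𝟙 A.X, by rw [S.box.id_tensorHom_id]; simp, by simp⟩
  comp {A B C} f g := ⟨f.hom ≫ g.hom, by
      rw [← S.box.tensorHom_comp_tensorHom, Category.assoc, g.mul_hom, ← Category.assoc,
        f.mul_hom, Category.assoc], by
      rw [← Category.assoc, f.one_hom, g.one_hom]⟩
  id_comp f := by apply MonHom.ext; simp
  comp_id f := by apply MonHom.ext; simp
  assoc f g h := by apply MonHom.ext; simp

section Aux

theorem mc_comp_left (Mc : MonoidalCategory D) {X Y Z W V : D} (f : X ⟶ Y) (g : Y ⟶ Z)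
    (h : W ⟶ V) :
    Mc.tensorHom (f ≫ g) h = Mc.tensorHom f (𝟙 W) ≫ Mc.tensorHom g h := by
  rw [Mc.tensorHom_comp_tensorHom, Category.id_comp]

theorem mc_comp_right (Mc : MonoidalCategory D) {X Y Z W V : D} (f : W ⟶ V) (g : X ⟶ Y)
    (h : Y ⟶ Z) :
    Mc.tensorHom f (g ≫ h) = Mc.tensorHom f g ≫ Mc.tensorHom (𝟙 V) h := by
  rw [Mc.tensorHom_comp_tensorHom, Category.comp_id]

theorem mc_split (Mc : MonoidalCategory D) {X Y Z W : D} (f : X ⟶ Y) (g : Z ⟶ W) :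
    Mc.tensorHom f g = Mc.tensorHom f (𝟙 Z) ≫ Mc.tensorHom (𝟙 Y) g := by
  rw [Mc.tensorHom_comp_tensorHom, Category.id_comp, Category.comp_id]

theorem mc_split' (Mc : MonoidalCategory D) {X Y Z W : D} (f : X ⟶ Y) (g : Z ⟶ W) :
    Mc.tensorHom f g = Mc.tensorHom (𝟙 X) g ≫ Mc.tensorHom f (𝟙 W) := by
  rw [Mc.tensorHom_comp_tensorHom, Category.id_comp, Category.comp_id]

theorem mc_id_tensorHom (Mc : MonoidalCategory D) (X : D) {Y₁ Y₂ : D} (f : Y₁ ⟶ Y₂) :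
    Mc.tensorHom (𝟙 X) f = Mc.whiskerLeft X f := by
  rw [Mc.tensorHom_def, Mc.id_whiskerRight, Category.id_comp]

theorem mc_tensorHom_id (Mc : MonoidalCategory D) {X₁ X₂ : D} (f : X₁ ⟶ X₂) (Y : D) :
    Mc.tensorHom f (𝟙 Y) = Mc.whiskerRight f Y := by
  rw [Mc.tensorHom_def, Mc.whiskerLeft_id, Category.comp_id]

theorem mc_leftUnitor_nat (Mc : MonoidalCategory D) {X Y : D} (f : X ⟶ Y) :
    Mc.tensorHom (𝟙 Mc.tensorUnit) f ≫ (Mc.leftUnitor Y).hom = (Mc.leftUnitor X).hom ≫ f := by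
  rw [mc_id_tensorHom, Mc.leftUnitor_naturality]

theorem mc_rightUnitor_nat (Mc : MonoidalCategory D) {X Y : D} (f : X ⟶ Y) :
    Mc.tensorHom f (𝟙 Mc.tensorUnit) ≫ (Mc.rightUnitor Y).hom = (Mc.rightUnitor X).hom ≫ f := by
  rw [mc_tensorHom_id, Mc.rightUnitor_naturality]

variable {S : DuoidalStruct D}

theorem ζ_nat_left {A B A' B' : D} (f : A ⟶ A') (g : B ⟶ B') (C E : D) :
    S.box.tensorHom (S.star.tensorHom f g) (𝟙 (S.star.tensorObj C E)) ≫ S.ζ A' B' C E =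
      S.ζ A B C E ≫
        S.star.tensorHom (S.box.tensorHom f (𝟙 C)) (S.box.tensorHom g (𝟙 E)) := by
  have := S.ζ_natural f g (𝟙 C) (𝟙 E)
  rwa [S.star.id_tensorHom_id] at this

theorem ζ_nat_right (A B : D) {C E C' E' : D} (h : C ⟶ C') (k : E ⟶ E') :
    S.box.tensorHom (𝟙 (S.star.tensorObj A B)) (S.star.tensorHom h k) ≫ S.ζ A B C' E' =
      S.ζ A B C E ≫
        S.star.tensorHom (S.box.tensorHom (𝟙 A) h) (S.box.tensorHom (𝟙 B) k) := by
  have := S.ζ_natural (𝟙 A) (𝟙 B) h k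
  rwa [S.star.id_tensorHom_id] at this

/-- The tensor product of two `⊠`-monoids along `⊗`. -/
@[reducible]
def tObj (A B : MonObj S) : MonObj S where
  X := S.star.tensorObj A.X B.X
  mul := S.ζ A.X B.X A.X B.X ≫ S.star.tensorHom A.mul B.mul
  one := S.Δ ≫ S.star.tensorHom A.one B.one
  is :=
    { mul_assoc := by
        rw [mc_comp_left S.box]
        simp only [Category.assoc]
        rw [reassoc_of% ζ_nat_left (S := S) A.mul B.mul A.X B.X,
          S.star.tensorHom_comp_tensorHom, A.is.mul_assoc, B.is.mul_assoc,
          ← S.star.tensorHom_comp_tensorHom, ← S.star.tensorHom_comp_tensorHom,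
          reassoc_of% S.ζ_box_assoc A.X B.X A.X B.X A.X B.X,
          ← reassoc_of% ζ_nat_right (S := S) A.X B.X A.mul B.mul,
          reassoc_of% S.box.tensorHom_comp_tensorHom (𝟙 (S.star.tensorObj A.X B.X))
            (S.ζ A.X B.X A.X B.X) (𝟙 (S.star.tensorObj A.X B.X))
            (S.star.tensorHom A.mul B.mul)]
      one_mul := by
        rw [mc_comp_left S.box]
        simp only [Category.assoc]
        rw [reassoc_of% ζ_nat_left (S := S) A.one B.one A.X B.X,
          S.star.tensorHom_comp_tensorHom, A.is.one_mul, B.is.one_mul]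
        simpa using S.ζ_box_leftUnitor A.X B.X
      mul_one := by
        rw [mc_comp_right S.box]
        simp only [Category.assoc]
        rw [reassoc_of% ζ_nat_right (S := S) A.X B.X A.one B.one,
          S.star.tensorHom_comp_tensorHom, A.is.mul_one, B.is.mul_one]
        simpa using S.ζ_box_rightUnitor A.X B.X }

/-- The tensor product of two maps of `⊠`-monoids along `⊗`. -/
def tHom {A B A' B' : MonObj S} (f : A ⟶ A') (g : B ⟶ B') : tObj A B ⟶ tObj A' B' where
  hom := S.star.tensorHom f.hom g.hom
  mul_hom := by
    show _ ≫ S.ζ A'.X B'.X A'.X B'.X ≫ _ = (S.ζ A.X B.X A.X B.X ≫ _) ≫ _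
    rw [reassoc_of% S.ζ_natural f.hom g.hom f.hom g.hom,
      S.star.tensorHom_comp_tensorHom, f.mul_hom, g.mul_hom, ← S.star.tensorHom_comp_tensorHom]
    simp only [Category.assoc]
  one_hom := by
    show (S.Δ ≫ _) ≫ _ = S.Δ ≫ _
    rw [Category.assoc, S.star.tensorHom_comp_tensorHom, f.one_hom, g.one_hom]

/-- The unit `⊠`-monoid `(1_⊗, μ, ι)`. -/
def tUnit : MonObj S :=
  ⟨S.star.tensorUnit, S.μ, S.ι, ⟨S.μ_assoc, S.μ_left_unit, S.μ_right_unit⟩⟩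

/-- Build an isomorphism of monoids from an isomorphism in `D` whose forward direction
is a map of monoids. -/
def monIso {A B : MonObj S} (e : A.X ≅ B.X)
    (h1 : S.box.tensorHom e.hom e.hom ≫ B.mul = A.mul ≫ e.hom)
    (h2 : A.one ≫ e.hom = B.one) : A ≅ B where
  hom := ⟨e.hom, h1, h2⟩
  inv := ⟨e.inv, by
      rw [Iso.eq_comp_inv, Category.assoc, ← h1, ← Category.assoc,
        S.box.tensorHom_comp_tensorHom, e.inv_hom_id, S.box.id_tensorHom_id, Category.id_comp], by
      rw [← h2, Category.assoc, e.hom_inv_id, Category.comp_id]⟩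
  hom_inv_id := by
    apply MonHom.ext
    show e.hom ≫ e.inv = 𝟙 A.X
    simp
  inv_hom_id := by
    apply MonHom.ext
    show e.inv ≫ e.hom = 𝟙 B.X
    simp

theorem assoc_mul_hom (A B C : MonObj S) :
    S.box.tensorHom (S.star.associator A.X B.X C.X).hom (S.star.associator A.X B.X C.X).hom ≫
      (tObj A (tObj B C)).mul = (tObj (tObj A B) C).mul ≫ (S.star.associator A.X B.X C.X).hom := by
  show _ = (S.ζ _ _ _ _ ≫ S.star.tensorHom (S.ζ A.X B.X A.X B.X ≫ _) C.mul) ≫ _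
  conv_rhs =>
    rw [mc_comp_left S.star]
    simp only [Category.assoc]
    rw [S.star.associator_naturality A.mul B.mul C.mul,
      reassoc_of% S.ζ_star_assoc A.X B.X C.X A.X B.X C.X,
      S.star.tensorHom_comp_tensorHom, Category.id_comp]

theorem assoc_one_hom (A B C : MonObj S) :
    (tObj (tObj A B) C).one ≫ (S.star.associator A.X B.X C.X).hom = (tObj A (tObj B C)).one := by
  show (S.Δ ≫ S.star.tensorHom (S.Δ ≫ _) C.one) ≫ _ = S.Δ ≫ _
  rw [mc_comp_left S.star]
  simp only [Category.assoc]
  rw [S.star.associator_naturality A.one B.one C.one,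
    reassoc_of% S.Δ_coassoc, S.star.tensorHom_comp_tensorHom, Category.id_comp]

theorem lUnit_mul_hom (A : MonObj S) :
    S.box.tensorHom (S.star.leftUnitor A.X).hom (S.star.leftUnitor A.X).hom ≫ A.mul =
      (tObj tUnit A).mul ≫ (S.star.leftUnitor A.X).hom := by
  show _ = (S.ζ _ _ _ _ ≫ S.star.tensorHom S.μ A.mul) ≫ _
  conv_rhs =>
    rw [mc_split S.star S.μ A.mul]
    simp only [Category.assoc]
    rw [mc_leftUnitor_nat S.star A.mul, reassoc_of% S.ζ_star_leftUnitor A.X A.X]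

theorem lUnit_one_hom (A : MonObj S) :
    (tObj tUnit A).one ≫ (S.star.leftUnitor A.X).hom = A.one := by
  show (S.Δ ≫ S.star.tensorHom S.ι A.one) ≫ _ = _
  rw [mc_split S.star S.ι A.one]
  simp only [Category.assoc]
  rw [mc_leftUnitor_nat S.star A.one, reassoc_of% S.Δ_left_counit]

theorem rUnit_mul_hom (A : MonObj S) :
    S.box.tensorHom (S.star.rightUnitor A.X).hom (S.star.rightUnitor A.X).hom ≫ A.mul =
      (tObj A tUnit).mul ≫ (S.star.rightUnitor A.X).hom := by
  show _ = (S.ζ _ _ _ _ ≫ S.star.tensorHom A.mul S.μ) ≫ _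
  conv_rhs =>
    rw [mc_split' S.star A.mul S.μ]
    simp only [Category.assoc]
    rw [mc_rightUnitor_nat S.star A.mul, reassoc_of% S.ζ_star_rightUnitor A.X A.X]

theorem rUnit_one_hom (A : MonObj S) :
    (tObj A tUnit).one ≫ (S.star.rightUnitor A.X).hom = A.one := by
  show (S.Δ ≫ S.star.tensorHom A.one S.ι) ≫ _ = _
  rw [mc_split' S.star A.one S.ι]
  simp only [Category.assoc]
  rw [mc_rightUnitor_nat S.star A.one, reassoc_of% S.Δ_right_counit]

/-- The monoidal structure on `⊠`-monoids. -/
def monMC (S : DuoidalStruct D) : MonoidalCategory (MonObj S) where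
  tensorObj := tObj
  tensorHom := tHom
  whiskerLeft A _ _ g := tHom (𝟙 A) g
  whiskerRight f B := tHom f (𝟙 B)
  tensorUnit := tUnit
  associator A B C := monIso (S.star.associator A.X B.X C.X) (assoc_mul_hom A B C)
    (assoc_one_hom A B C)
  leftUnitor A := monIso (S.star.leftUnitor A.X) (lUnit_mul_hom A) (lUnit_one_hom A)
  rightUnitor A := monIso (S.star.rightUnitor A.X) (rUnit_mul_hom A) (rUnit_one_hom A)
  tensorHom_def f g := by
    apply MonHom.ext
    show S.star.tensorHom f.hom g.hom = S.star.tensorHom f.hom (𝟙 _) ≫ S.star.tensorHom (𝟙 _) g.hom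
    rw [← mc_split]
  id_tensorHom_id A B := by
    apply MonHom.ext
    exact S.star.id_tensorHom_id A.X B.X
  tensorHom_comp_tensorHom f₁ f₂ g₁ g₂ := by
    apply MonHom.ext
    exact S.star.tensorHom_comp_tensorHom f₁.hom f₂.hom g₁.hom g₂.hom
  whiskerLeft_id A B := by
    apply MonHom.ext
    exact S.star.id_tensorHom_id A.X B.X
  id_whiskerRight A B := by
    apply MonHom.ext
    exact S.star.id_tensorHom_id A.X B.X
  associator_naturality f₁ f₂ f₃ := by
    apply MonHom.ext
    exact S.star.associator_naturality f₁.hom f₂.hom f₃.hom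
  leftUnitor_naturality f := by
    apply MonHom.ext
    exact mc_leftUnitor_nat S.star f.hom
  rightUnitor_naturality f := by
    apply MonHom.ext
    exact mc_rightUnitor_nat S.star f.hom
  pentagon A B C E := by
    apply MonHom.ext
    show S.star.tensorHom (S.star.associator A.X B.X C.X).hom (𝟙 E.X) ≫
        (S.star.associator A.X (S.star.tensorObj B.X C.X) E.X).hom ≫
        S.star.tensorHom (𝟙 A.X) (S.star.associator B.X C.X E.X).hom =
      (S.star.associator (S.star.tensorObj A.X B.X) C.X E.X).hom ≫
        (S.star.associator A.X B.X (S.star.tensorObj C.X E.X)).hom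
    rw [mc_id_tensorHom, mc_tensorHom_id]
    exact S.star.pentagon A.X B.X C.X E.X
  triangle A B := by
    apply MonHom.ext
    show (S.star.associator A.X S.star.tensorUnit B.X).hom ≫
        S.star.tensorHom (𝟙 A.X) (S.star.leftUnitor B.X).hom =
      S.star.tensorHom (S.star.rightUnitor A.X).hom (𝟙 B.X)
    rw [mc_id_tensorHom, mc_tensorHom_id]
    exact S.star.triangle A.X B.X

end Aux

/-- For a duoidal category `(D, ⊠, 1_⊠, ⊗, 1_⊗, ζ)`, the category of `⊠`-monoids
carries a monoidal structure under `⊗`: the tensor product of monoids `(M, m_M, u_M)`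
and `(N, m_N, u_N)` is `M ⊗ N` with multiplication `ζ ≫ (m_M ⊗ m_N)`, unit
`Δ ≫ (u_M ⊗ u_N)`, whose tensor product of monoid morphisms is `⊗`, and whose
monoidal unit is the monoid `(1_⊗, μ, ι)`. -/
theorem mon_monoidal (S : DuoidalStruct D) :
    ∃ M : MonoidalCategory (MonObj S),
      (∀ A B : MonObj S, (M.tensorObj A B).X = S.star.tensorObj A.X B.X) ∧
      (∀ A B : MonObj S, HEq (M.tensorObj A B).mul
        (S.ζ A.X B.X A.X B.X ≫ S.star.tensorHom A.mul B.mul)) ∧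
      (∀ A B : MonObj S, HEq (M.tensorObj A B).one
        (S.Δ ≫ S.star.tensorHom A.one B.one)) ∧
      (∀ (A B A' B' : MonObj S) (f : A ⟶ A') (g : B ⟶ B'),
        HEq (MonHom.hom (M.tensorHom f g)) (S.star.tensorHom f.hom g.hom)) ∧
      M.tensorUnit.X = S.star.tensorUnit ∧
      HEq M.tensorUnit.mul S.μ ∧
      HEq M.tensorUnit.one S.ι := by
  exact ⟨monMC S, fun A B => rfl, fun A B => HEq.rfl, fun A B => HEq.rfl,
    fun A B A' B' f g => HEq.rfl, rfl, HEq.rfl, HEq.rfl⟩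
end
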